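/- arXiv:2411.10807 — 2 statements merged into one kernel-verified Lean document; each statement's English description precedes it below -/
import Mathlib

section
/- Let n ≥ 1, let J : ℝ⁴ → Mₙ(ℂ) (coordinates denoted (z, z̃, w, w̃)) be twice continuously differentiable with J(p) invertible for every p, and let K : ℝ⁴ → Mₙ(ℂ) be continuously differentiable. Suppose (J, K) satisfy the Miura transformation ∂_{z̃}K = −(∂_w J)J⁻¹ and ∂_{w̃}K = −(∂_z J)J⁻¹. Then K satisfies the K-matrix form of the self-dual Yang–Mills equation: ∂_z∂_{z̃}K − ∂_w∂_{w̃}K − [∂_{z̃}K, ∂_{w̃}K] = 0, where [A,B] = AB − BA. -/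
/-!
With `A = ∂_z J`, `B = ∂_w J` and `G = J⁻¹`, the Miura transformation reads `∂_{z̃}K = -BG`,
`∂_{w̃}K = -AG`. Differentiating with `∂_z G = -GAG` and `∂_w G = -GBG` gives
`∂_z∂_{z̃}K = -(∂_z∂_w J)G + BGAG` and `∂_w∂_{w̃}K = -(∂_w∂_z J)G + AGBG`. The second
derivatives of `J` cancel by the symmetry of mixed partials, and what is left, `BGAG - AGBG`, is
exactly the commutator `[∂_{z̃}K, ∂_{w̃}K] = [BG, AG]`.
-/

open Matrix

/-- Partial derivative of a scalar function on `ℝ⁴` with respect to the `μ`-th coordinate. -/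
noncomputable def pd (μ : Fin 4) (f : (Fin 4 → ℝ) → ℂ) (p : Fin 4 → ℝ) : ℂ :=
  deriv (fun s => f (Function.update p μ s)) (p μ)

/-- Entrywise partial derivative of a matrix-valued function on `ℝ⁴`. -/
noncomputable def pdM {n : ℕ} (μ : Fin 4) (J : (Fin 4 → ℝ) → Matrix (Fin n) (Fin n) ℂ)
    (p : Fin 4 → ℝ) : Matrix (Fin n) (Fin n) ℂ :=
  Matrix.of fun i j => pd μ (fun q => J q i j) p

section PartialDeriv

variable {f g : (Fin 4 → ℝ) → ℂ} {p : Fin 4 → ℝ} {μ ν : Fin 4}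

theorem hasDerivAt_pd (hf : DifferentiableAt ℝ f p) :
    HasDerivAt (fun t => f (Function.update p μ t)) (fderiv ℝ f p (Pi.single μ 1)) (p μ) := by
  have hf' : HasFDerivAt f (fderiv ℝ f p) (Function.update p μ (p μ)) := by
    rw [Function.update_eq_self]
    exact hf.hasFDerivAt
  exact hf'.comp_hasDerivAt (p μ) (hasDerivAt_update p μ (p μ))

theorem pd_eq_fderiv (hf : DifferentiableAt ℝ f p) : pd μ f p = fderiv ℝ f p (Pi.single μ 1) :=
  (hasDerivAt_pd hf).deriv

theorem pd_eq_fderiv_of_differentiable (hf : Differentiable ℝ f) :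
    pd μ f = fun q => fderiv ℝ f q (Pi.single μ 1) :=
  funext fun q => pd_eq_fderiv (hf q)

theorem pd_neg : pd μ (fun q => -f q) p = -pd μ f p := by
  simp only [pd, deriv.fun_neg]

theorem pd_mul (hf : DifferentiableAt ℝ f p) (hg : DifferentiableAt ℝ g p) :
    pd μ (fun q => f q * g q) p = pd μ f p * g p + f p * pd μ g p := by
  simpa only [pd, Function.update_eq_self] using
    deriv_fun_mul (hasDerivAt_pd (μ := μ) hf).differentiableAt
      (hasDerivAt_pd (μ := μ) hg).differentiableAt

theorem pd_sum {ι : Type*} (s : Finset ι) {f : ι → (Fin 4 → ℝ) → ℂ}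
    (hf : ∀ i ∈ s, DifferentiableAt ℝ (f i) p) :
    pd μ (fun q => ∑ i ∈ s, f i q) p = ∑ i ∈ s, pd μ (f i) p := by
  simpa only [pd] using deriv_fun_sum (u := s) (x := p μ)
    fun i hi => (hasDerivAt_pd (μ := μ) (hf i hi)).differentiableAt

theorem ContDiff.pd {k m : WithTop ℕ∞} (hf : ContDiff ℝ m f) (hkm : k + 1 ≤ m) :
    ContDiff ℝ k (pd μ f) := by
  rw [pd_eq_fderiv_of_differentiable (hf.differentiable (lt_of_lt_of_le (by simp) hkm).ne')]
  exact (hf.fderiv_right hkm).clm_apply contDiff_const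

theorem pd_pd_comm (hf : ContDiff ℝ 2 f) : pd μ (pd ν f) p = pd ν (pd μ f) p := by
  have hf' : Differentiable ℝ (fderiv ℝ f) :=
    (hf.fderiv_right (m := 1) le_rfl).differentiable one_ne_zero
  have hsecond : ∀ a b : Fin 4,
      pd a (pd b f) p = fderiv ℝ (fderiv ℝ f) p (Pi.single a 1) (Pi.single b 1) := by
    intro a b
    rw [pd_eq_fderiv_of_differentiable (hf.differentiable two_ne_zero),
      pd_eq_fderiv ((hf' p).clm_apply (differentiableAt_const _)),
      fderiv_clm_apply (hf' p) (differentiableAt_const _)]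
    simp
  rw [hsecond, hsecond]
  exact (hf.contDiffAt.isSymmSndFDerivAt (by simp)).eq _ _

end PartialDeriv

section MatrixPartialDeriv

variable {n : ℕ} {A B : (Fin 4 → ℝ) → Matrix (Fin n) (Fin n) ℂ} {p : Fin 4 → ℝ} {μ ν : Fin 4}

theorem pdM_neg : pdM μ (fun q => -A q) p = -pdM μ A p := by
  ext i j
  exact pd_neg (f := fun q => A q i j)

theorem pdM_const (C : Matrix (Fin n) (Fin n) ℂ) : pdM μ (fun _ => C) p = 0 := by
  ext i j
  simp [pdM, pd]

theorem pdM_mul (hA : ∀ i j, DifferentiableAt ℝ (fun q => A q i j) p)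
    (hB : ∀ i j, DifferentiableAt ℝ (fun q => B q i j) p) :
    pdM μ (fun q => A q * B q) p = pdM μ A p * B p + A p * pdM μ B p := by
  ext i j
  have hsum := pd_sum (μ := μ) Finset.univ (f := fun k q => A q i k * B q k j)
    fun k _ => (hA i k).mul (hB k j)
  simp only [pdM, Matrix.add_apply, Matrix.mul_apply, Matrix.of_apply, hsum,
    ← Finset.sum_add_distrib]
  exact Finset.sum_congr rfl fun k _ => pd_mul (hA i k) (hB k j)

theorem pdM_pdM_comm (hA : ∀ i j, ContDiff ℝ 2 fun q => A q i j) :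
    pdM μ (pdM ν A) p = pdM ν (pdM μ A) p := by
  ext i j
  exact pd_pd_comm (hA i j)

end MatrixPartialDeriv

section MatrixSmoothness

variable {E : Type*} [NormedAddCommGroup E] [NormedSpace ℝ E] {ι : Type*} [Fintype ι]
  [DecidableEq ι] {k : WithTop ℕ∞} {M : E → Matrix ι ι ℂ}

theorem contDiff_det_of_entries (hM : ∀ i j, ContDiff ℝ k fun q => M q i j) :
    ContDiff ℝ k fun q => (M q).det := by
  simp only [det_apply']
  exact ContDiff.sum fun σ _ => contDiff_const.mul (contDiff_prod fun i _ => hM (σ i) i)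

theorem contDiff_adjugate_entry (hM : ∀ i j, ContDiff ℝ k fun q => M q i j) (i j : ι) :
    ContDiff ℝ k fun q => (M q).adjugate i j := by
  simp only [adjugate_apply]
  refine contDiff_det_of_entries fun a b => ?_
  rcases eq_or_ne a j with rfl | ha
  · simpa only [updateRow_self] using contDiff_const
  · simpa only [updateRow_ne ha] using hM a b

theorem contDiff_inv_entry (hM : ∀ i j, ContDiff ℝ k fun q => M q i j)
    (hM_unit : ∀ q, IsUnit (M q)) (i j : ι) : ContDiff ℝ k fun q => (M q)⁻¹ i j := by
  have hdet : ∀ q, (M q).det ≠ 0 := fun q => ((isUnit_iff_isUnit_det _).mp (hM_unit q)).ne_zero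
  simp only [inv_def, Ring.inverse_eq_inv', Matrix.smul_apply, smul_eq_mul]
  exact ((contDiff_det_of_entries hM).inv hdet).mul (contDiff_adjugate_entry hM i j)

end MatrixSmoothness

section MatrixInverse

variable {n : ℕ} {J : (Fin 4 → ℝ) → Matrix (Fin n) (Fin n) ℂ} {p : Fin 4 → ℝ} {μ ν : Fin 4}

theorem pdM_inv (hJ : ∀ i j, ContDiff ℝ 1 fun q => J q i j) (hJ_unit : ∀ q, IsUnit (J q)) :
    pdM μ (fun q => (J q)⁻¹) p = -((J p)⁻¹ * pdM μ J p * (J p)⁻¹) := by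
  have hdet : ∀ q, IsUnit (J q).det := fun q => (isUnit_iff_isUnit_det _).mp (hJ_unit q)
  have hprod := pdM_mul (μ := μ) (p := p) (fun i j => (hJ i j).differentiable one_ne_zero p)
    fun i j => (contDiff_inv_entry hJ hJ_unit i j).differentiable one_ne_zero p
  simp only [mul_nonsing_inv _ (hdet _), pdM_const] at hprod
  calc pdM μ (fun q => (J q)⁻¹) p
      = (J p)⁻¹ * (J p * pdM μ (fun q => (J q)⁻¹) p) := by
        rw [← Matrix.mul_assoc, nonsing_inv_mul _ (hdet p), Matrix.one_mul]
    _ = -((J p)⁻¹ * pdM μ J p * (J p)⁻¹) := by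
        rw [eq_neg_of_add_eq_zero_right hprod.symm]
        noncomm_ring

theorem pdM_neg_pdM_mul_inv (hJ : ∀ i j, ContDiff ℝ 2 fun q => J q i j)
    (hJ_unit : ∀ q, IsUnit (J q)) :
    pdM μ (fun q => -(pdM ν J q * (J q)⁻¹)) p
      = -(pdM μ (pdM ν J) p * (J p)⁻¹) + pdM ν J p * (J p)⁻¹ * pdM μ J p * (J p)⁻¹ := by
  have hJ₁ : ∀ i j, ContDiff ℝ 1 fun q => J q i j := fun i j => (hJ i j).of_le one_le_two
  have hpdJ : ∀ i j, DifferentiableAt ℝ (fun q => pdM ν J q i j) p :=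
    fun i j => ((hJ i j).pd le_rfl).differentiable one_ne_zero p
  have hJinv : ∀ i j, DifferentiableAt ℝ (fun q => (J q)⁻¹ i j) p :=
    fun i j => (contDiff_inv_entry hJ₁ hJ_unit i j).differentiable one_ne_zero p
  rw [pdM_neg, pdM_mul hpdJ hJinv, pdM_inv hJ₁ hJ_unit]
  noncomm_ring

end MatrixInverse

theorem sdym_K_from_miura_general {n : ℕ}
    (J K : (Fin 4 → ℝ) → Matrix (Fin n) (Fin n) ℂ)
    (hJ : ∀ i j, ContDiff ℝ 2 fun p => J p i j)
    (hJunit : ∀ p, IsUnit (J p))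
    (hMiura1 : ∀ p, pdM 1 K p = -(pdM 2 J p * (J p)⁻¹))
    (hMiura2 : ∀ p, pdM 3 K p = -(pdM 0 J p * (J p)⁻¹)) :
    ∀ p, pdM 0 (fun q => pdM 1 K q) p - pdM 2 (fun q => pdM 3 K q) p
        - (pdM 1 K p * pdM 3 K p - pdM 3 K p * pdM 1 K p) = 0 := by
  intro p
  rw [show pdM 1 K = _ from funext hMiura1, show pdM 3 K = _ from funext hMiura2,
    pdM_neg_pdM_mul_inv hJ hJunit, pdM_neg_pdM_mul_inv hJ hJunit, pdM_pdM_comm hJ]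
  noncomm_ring

/-- coordinates (z, z̃, w, w̃) = (0, 1, 2, 3).  If `(J, K)` satisfy the Miura
transformation `∂_z̃ K = −(∂_w J)J⁻¹`, `∂_w̃ K = −(∂_z J)J⁻¹`, then `K` satisfies the
K-matrix form of the SDYM equation
`∂_z ∂_z̃ K − ∂_w ∂_w̃ K − [∂_z̃ K, ∂_w̃ K] = 0`. -/
theorem sdym_K_from_miura {n : ℕ} (hn : 1 ≤ n)
    (J K : (Fin 4 → ℝ) → Matrix (Fin n) (Fin n) ℂ)
    (hJ : ∀ i j, ContDiff ℝ 2 fun p => J p i j)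
    (hJunit : ∀ p, IsUnit (J p))
    (hK : ∀ i j, ContDiff ℝ 1 fun p => K p i j)
    (hMiura1 : ∀ p, pdM 1 K p = -(pdM 2 J p * (J p)⁻¹))
    (hMiura2 : ∀ p, pdM 3 K p = -(pdM 0 J p * (J p)⁻¹)) :
    ∀ p, pdM 0 (fun q => pdM 1 K q) p - pdM 2 (fun q => pdM 3 K q) p
        - (pdM 1 K p * pdM 3 K p - pdM 3 K p * pdM 1 K p) = 0 :=
  sdym_K_from_miura_general J K hJ hJunit hMiura1 hMiura2
end

section
/- Let J, K : ℝ² → M₂(ℂ) (coordinates denoted (z, z̃)) be smooth, with det J(z, z̃) = 1 for all (z, z̃) and with the (1,1)-entry J₁₁ nowhere zero, and suppose they satisfy the reduced Miura system ∂_z J = −[K, σ₃]J and ∂_{z̃}K = −[J, σ₃]J⁻¹. Define u = i·J₂₁/J₁₁ and v = K₁₂. Then (u, v) solves the pKN(−1) system in the rescaled coordinates (x, t) = (2z̃, 2z); equivalently, ∂_z∂_{z̃}u − 4u − 4i·u·v·∂_{z̃}u = 0 and ∂_z∂_{z̃}v − 4v + 4i·v·u·∂_{z̃}v = 0. -/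
open Matrix

/-- Partial derivative with respect to the first coordinate `z`. -/
noncomputable def pdz (f : ℝ × ℝ → ℂ) (p : ℝ × ℝ) : ℂ :=
  deriv (fun s => f (s, p.2)) p.1

/-- Partial derivative with respect to the second coordinate `z̃`. -/
noncomputable def pdzt (f : ℝ × ℝ → ℂ) (p : ℝ × ℝ) : ℂ :=
  deriv (fun s => f (p.1, s)) p.2

/-- Entrywise `∂_z` of a matrix-valued function. -/
noncomputable def pdzM (J : ℝ × ℝ → Matrix (Fin 2) (Fin 2) ℂ) (p : ℝ × ℝ) :
    Matrix (Fin 2) (Fin 2) ℂ :=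
  Matrix.of fun i j => pdz (fun q => J q i j) p

/-- Entrywise `∂_z̃` of a matrix-valued function. -/
noncomputable def pdztM (J : ℝ × ℝ → Matrix (Fin 2) (Fin 2) ℂ) (p : ℝ × ℝ) :
    Matrix (Fin 2) (Fin 2) ℂ :=
  Matrix.of fun i j => pdzt (fun q => J q i j) p

/-- The third Pauli matrix `σ₃ = diag(1, −1)`. -/
def sigma3 : Matrix (Fin 2) (Fin 2) ℂ := !![1, 0; 0, -1]

/- ### Auxiliary lemmas -/

lemma diff_sliceZ {f : ℝ × ℝ → ℂ} (hf : ContDiff ℝ (⊤ : ℕ∞) f) (p : ℝ × ℝ) :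
    DifferentiableAt ℝ (fun s => f (s, p.2)) p.1 :=
  (hf.differentiable (by simp) (p.1, p.2)).comp p.1
    (differentiableAt_id.prodMk (differentiableAt_const p.2))

lemma diff_sliceZt {f : ℝ × ℝ → ℂ} (hf : ContDiff ℝ (⊤ : ℕ∞) f) (p : ℝ × ℝ) :
    DifferentiableAt ℝ (fun s => f (p.1, s)) p.2 :=
  (hf.differentiable (by simp) (p.1, p.2)).comp p.2
    ((differentiableAt_const p.1).prodMk differentiableAt_id)

lemma hasDerivAt_pdz {f : ℝ × ℝ → ℂ} (hf : ContDiff ℝ (⊤ : ℕ∞) f) (p : ℝ × ℝ) :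
    HasDerivAt (fun s => f (s, p.2)) (pdz f p) p.1 :=
  (diff_sliceZ hf p).hasDerivAt

lemma hasDerivAt_pdzt {f : ℝ × ℝ → ℂ} (hf : ContDiff ℝ (⊤ : ℕ∞) f) (p : ℝ × ℝ) :
    HasDerivAt (fun s => f (p.1, s)) (pdzt f p) p.2 :=
  (diff_sliceZt hf p).hasDerivAt

lemma pdz_eq_fderiv {f : ℝ × ℝ → ℂ} {p : ℝ × ℝ} (hf : DifferentiableAt ℝ f p) :
    pdz f p = fderiv ℝ f p (1, 0) := by
  have h1 : HasDerivAt (fun s : ℝ => (s, p.2)) ((1:ℝ), (0:ℝ)) p.1 :=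
    (hasDerivAt_id p.1).prodMk (hasDerivAt_const p.1 p.2)
  have := hf.hasFDerivAt.comp_hasDerivAt p.1 h1
  simpa [pdz, Function.comp_def] using this.deriv

lemma pdzt_eq_fderiv {f : ℝ × ℝ → ℂ} {p : ℝ × ℝ} (hf : DifferentiableAt ℝ f p) :
    pdzt f p = fderiv ℝ f p (0, 1) := by
  have h1 : HasDerivAt (fun s : ℝ => (p.1, s)) ((0:ℝ), (1:ℝ)) p.2 :=
    (hasDerivAt_const p.2 p.1).prodMk (hasDerivAt_id p.2)
  have := hf.hasFDerivAt.comp_hasDerivAt p.2 h1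
  simpa [pdzt, Function.comp_def] using this.deriv

/-- Clairaut/Schwarz symmetry of mixed partials for smooth functions. -/
lemma pdz_pdzt_comm {f : ℝ × ℝ → ℂ} (hf : ContDiff ℝ (⊤ : ℕ∞) f) (p : ℝ × ℝ) :
    pdz (fun q => pdzt f q) p = pdzt (fun q => pdz f q) p := by
  have hdf : Differentiable ℝ f := hf.differentiable (by simp)
  have hf' : ContDiff ℝ (⊤ : ℕ∞) (fderiv ℝ f) := hf.fderiv_right (by simp)
  have hdf' : Differentiable ℝ (fderiv ℝ f) := hf'.differentiable (by simp)
  have e1 : (fun q => pdzt f q) = fun q => fderiv ℝ f q (0, 1) := by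
    funext q; exact pdzt_eq_fderiv (hdf q)
  have e2 : (fun q => pdz f q) = fun q => fderiv ℝ f q (1, 0) := by
    funext q; exact pdz_eq_fderiv (hdf q)
  rw [e1, e2]
  have d1 : DifferentiableAt ℝ (fun q => fderiv ℝ f q ((0:ℝ), (1:ℝ))) p :=
    (hdf' p).clm_apply (differentiableAt_const _)
  have d2 : DifferentiableAt ℝ (fun q => fderiv ℝ f q ((1:ℝ), (0:ℝ))) p :=
    (hdf' p).clm_apply (differentiableAt_const _)
  rw [pdz_eq_fderiv d1, pdzt_eq_fderiv d2]
  rw [fderiv_clm_apply (hdf' p) (differentiableAt_const _),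
      fderiv_clm_apply (hdf' p) (differentiableAt_const _)]
  simp only [fderiv_const_apply, Pi.zero_apply, ContinuousLinearMap.comp_zero, ContinuousLinearMap.zero_apply, zero_add,
    ContinuousLinearMap.add_apply, ContinuousLinearMap.flip_apply]
  exact second_derivative_symmetric (fun y => (hdf y).hasFDerivAt) (hdf' p).hasFDerivAt _ _

/-- from the reduced Miura system `∂_z J = −[K,σ₃]J`, `∂_z̃ K = −[J,σ₃]J⁻¹`
with `det J = 1` and `J₁₁ ≠ 0`, the pair `u = i·J₂₁/J₁₁`, `v = K₁₂` solves the pKN(−1)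
system in rescaled coordinates `(x,t) = (2z̃, 2z)`; equivalently
`∂_z∂_z̃ u − 4u − 4i·u·v·∂_z̃ u = 0` and `∂_z∂_z̃ v − 4v + 4i·v·u·∂_z̃ v = 0`. -/
theorem pKN_from_reduced_miura_alt
    (J K : ℝ × ℝ → Matrix (Fin 2) (Fin 2) ℂ)
    (hJ : ∀ i j, ContDiff ℝ (⊤ : ℕ∞) fun p => J p i j)
    (hK : ∀ i j, ContDiff ℝ (⊤ : ℕ∞) fun p => K p i j)
    (hdet : ∀ p, (J p).det = 1)
    (hJ11 : ∀ p, J p 0 0 ≠ 0)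
    (hMiura1 : ∀ p, pdzM J p = -((K p * sigma3 - sigma3 * K p) * J p))
    (hMiura2 : ∀ p, pdztM K p = -((J p * sigma3 - sigma3 * J p) * (J p)⁻¹))
    (u v : ℝ × ℝ → ℂ)
    (hu : u = fun p => Complex.I * J p 1 0 / J p 0 0)
    (hv : v = fun p => K p 0 1) :
    ∀ p, pdz (fun q => pdzt u q) p - 4 * u p - 4 * Complex.I * u p * v p * pdzt u p = 0 ∧
         pdz (fun q => pdzt v q) p - 4 * v p + 4 * Complex.I * v p * u p * pdzt v p = 0 := by
  subst hu hv
  -- entrywise consequences of the Miura system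
  have key : ∀ p : ℝ × ℝ,
      pdz (fun q => J q 0 0) p = 2 * K p 0 1 * J p 1 0 ∧
      pdz (fun q => J q 0 1) p = 2 * K p 0 1 * J p 1 1 ∧
      pdz (fun q => J q 1 0) p = -(2 * K p 1 0 * J p 0 0) ∧
      pdzt (fun q => K q 0 1) p = 2 * J p 0 0 * J p 0 1 ∧
      pdzt (fun q => K q 1 0) p = -(2 * J p 1 0 * J p 1 1) := by
    intro p
    have hinv : (J p)⁻¹ = !![J p 1 1, -(J p 0 1); -(J p 1 0), J p 0 0] := by
      rw [Matrix.inv_def, Matrix.adjugate_fin_two, hdet p]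
      simp
    have h1 := hMiura1 p
    have h2 := hMiura2 p
    rw [hinv] at h2
    have e1 : ∀ i j, pdzM J p i j = (-((K p * sigma3 - sigma3 * K p) * J p)) i j :=
      fun i j => by rw [h1]
    have e2 : ∀ i j, pdztM K p i j =
        (-((J p * sigma3 - sigma3 * J p) *
          !![J p 1 1, -(J p 0 1); -(J p 1 0), J p 0 0])) i j := fun i j => by rw [h2]
    have a00 := e1 0 0; have a01 := e1 0 1; have a10 := e1 1 0
    have b01 := e2 0 1; have b10 := e2 1 0
    simp only [pdzM, pdztM, Matrix.of_apply, Matrix.neg_apply, Matrix.sub_apply,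
      Matrix.mul_apply, Fin.sum_univ_two, sigma3, Matrix.cons_val_zero, Matrix.cons_val_one,
      Matrix.head_cons, Matrix.head_fin_const, Matrix.cons_val', Matrix.empty_val',
      Matrix.cons_val_fin_one] at a00 a01 a10 b01 b10
    exact ⟨by rw [a00]; ring, by rw [a01]; ring, by rw [a10]; ring,
      by rw [b01]; ring, by rw [b10]; ring⟩
  -- smoothness of u
  have hU : ContDiff ℝ (⊤ : ℕ∞) (fun p => Complex.I * J p 1 0 / J p 0 0) := by
    simp only [div_eq_mul_inv]
    exact (contDiff_const.mul (hJ 1 0)).mul ((hJ 0 0).inv hJ11)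
  -- determinant identity
  have hdet' : ∀ p : ℝ × ℝ, J p 0 0 * J p 1 1 - J p 0 1 * J p 1 0 = 1 := by
    intro p
    have := hdet p
    rwa [Matrix.det_fin_two] at this
  -- first z-derivative of u
  have hpdzu : ∀ q : ℝ × ℝ, pdz (fun p => Complex.I * J p 1 0 / J p 0 0) q =
      -(2 * Complex.I * K q 1 0) +
      2 * Complex.I * (K q 0 1 * (Complex.I * J q 1 0 / J q 0 0) *
        (Complex.I * J q 1 0 / J q 0 0)) := by
    intro q
    have h1 : HasDerivAt (fun s => Complex.I * J (s, q.2) 1 0 / J (s, q.2) 0 0)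
        ((Complex.I * pdz (fun p => J p 1 0) q * J q 0 0 -
          Complex.I * J q 1 0 * pdz (fun p => J p 0 0) q) / J q 0 0 ^ 2) q.1 :=
      ((hasDerivAt_pdz (hJ 1 0) q).const_mul Complex.I).div
        (hasDerivAt_pdz (hJ 0 0) q) (hJ11 (q.1, q.2))
    have h2 : pdz (fun p => Complex.I * J p 1 0 / J p 0 0) q =
        (Complex.I * pdz (fun p => J p 1 0) q * J q 0 0 -
          Complex.I * J q 1 0 * pdz (fun p => J p 0 0) q) / J q 0 0 ^ 2 := h1.deriv
    obtain ⟨k1, -, k3, -, -⟩ := key q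
    rw [h2, k1, k3]
    have hA := hJ11 q
    field_simp
    linear_combination (-(J q 1 0 ^ 2 * K q 0 1)) * Complex.I_sq
  rintro p
  obtain ⟨-, k2, -, k4, k5⟩ := key p
  constructor
  · -- equation for u
    have hcomm := pdz_pdzt_comm hU p
    rw [hcomm]
    have hfun : (fun q => pdz (fun p => Complex.I * J p 1 0 / J p 0 0) q) =
        fun q => -(2 * Complex.I * K q 1 0) +
          2 * Complex.I * (K q 0 1 * (Complex.I * J q 1 0 / J q 0 0) *
            (Complex.I * J q 1 0 / J q 0 0)) := funext hpdzu
    rw [hfun]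
    have hD : HasDerivAt
        (fun s => -(2 * Complex.I * K (p.1, s) 1 0) +
          2 * Complex.I * (K (p.1, s) 0 1 *
            (Complex.I * J (p.1, s) 1 0 / J (p.1, s) 0 0) *
            (Complex.I * J (p.1, s) 1 0 / J (p.1, s) 0 0)))
        (-(2 * Complex.I * pdzt (fun q => K q 1 0) p) +
          2 * Complex.I * ((pdzt (fun q => K q 0 1) p *
              (Complex.I * J p 1 0 / J p 0 0) +
            K p 0 1 * pdzt (fun p => Complex.I * J p 1 0 / J p 0 0) p) *
              (Complex.I * J p 1 0 / J p 0 0) +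
            K p 0 1 * (Complex.I * J p 1 0 / J p 0 0) *
              pdzt (fun p => Complex.I * J p 1 0 / J p 0 0) p)) p.2 :=
      (((hasDerivAt_pdzt (hK 1 0) p).const_mul (2 * Complex.I)).neg).add
        ((((hasDerivAt_pdzt (hK 0 1) p).mul (hasDerivAt_pdzt hU p)).mul
          (hasDerivAt_pdzt hU p)).const_mul (2 * Complex.I))
    have hval : pdzt (fun q => -(2 * Complex.I * K q 1 0) +
          2 * Complex.I * (K q 0 1 * (Complex.I * J q 1 0 / J q 0 0) *
            (Complex.I * J q 1 0 / J q 0 0))) p =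
        -(2 * Complex.I * pdzt (fun q => K q 1 0) p) +
          2 * Complex.I * ((pdzt (fun q => K q 0 1) p *
              (Complex.I * J p 1 0 / J p 0 0) +
            K p 0 1 * pdzt (fun p => Complex.I * J p 1 0 / J p 0 0) p) *
              (Complex.I * J p 1 0 / J p 0 0) +
            K p 0 1 * (Complex.I * J p 1 0 / J p 0 0) *
              pdzt (fun p => Complex.I * J p 1 0 / J p 0 0) p) := hD.deriv
    rw [hval, k4, k5]
    have hA := hJ11 p
    have hd := hdet' p
    set P := pdzt (fun p => Complex.I * J p 1 0 / J p 0 0) p with hP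
    field_simp
    linear_combination (4 * Complex.I * J p 1 0) * hd +
      (4 * Complex.I * J p 1 0 ^ 2 * J p 0 1) * Complex.I_sq
  · -- equation for v
    have hfun : (fun q => pdzt (fun r => K r 0 1) q) =
        fun q => 2 * (J q 0 0 * J q 0 1) := by
      funext q
      obtain ⟨-, -, -, k4', -⟩ := key q
      rw [k4']; ring
    rw [hfun]
    have hD : HasDerivAt (fun s => 2 * (J (s, p.2) 0 0 * J (s, p.2) 0 1))
        (2 * (pdz (fun q => J q 0 0) p * J p 0 1 +
          J p 0 0 * pdz (fun q => J q 0 1) p)) p.1 :=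
      ((hasDerivAt_pdz (hJ 0 0) p).mul (hasDerivAt_pdz (hJ 0 1) p)).const_mul 2
    have hval : pdz (fun q => 2 * (J q 0 0 * J q 0 1)) p =
        2 * (pdz (fun q => J q 0 0) p * J p 0 1 +
          J p 0 0 * pdz (fun q => J q 0 1) p) := hD.deriv
    obtain ⟨k1, k2', -, k4', -⟩ := key p
    rw [hval, k1, k2', k4']
    have hA := hJ11 p
    have hd := hdet' p
    field_simp
    linear_combination (4 * K p 0 1) * hd +
      (8 * K p 0 1 * J p 1 0 * J p 0 1) * Complex.I_sq
end
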